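/- Let p be a prime with p > 3, k a field of characteristic p, and a ∈ k^×. If α, β ∈ k satisfy αβ^p − α^p β = −a, then u = α^{p−1} and v = αβ satisfy v^p − u²v + a·u = 0 whenever α ≠ 0; and further U = uv − a/2, V = v satisfy U² = V^{p+1} + a²/4. -/
import Mathlib

/-- The hyperelliptic model of the Drinfeld components of `X_s(p)`: if
`αβ^p - α^p β = -a` with `α ≠ 0`, then `u = α^(p-1)`, `v = αβ` satisfy
`v^p - u²v + au = 0`, and `U = uv - a/2`, `V = v` satisfy `U² = V^(p+1) + a²/4`. -/
theorem split_drinfeld_hyperelliptic {p : ℕ} (hp : p.Prime) (hp3 : 3 < p)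
    {k : Type*} [Field k] [CharP k p]
    (a : k) (ha : a ≠ 0) (α β : k) (hα : α ≠ 0)
    (h : α * β ^ p - α ^ p * β = -a) :
    (α * β) ^ p - (α ^ (p - 1)) ^ 2 * (α * β) + a * α ^ (p - 1) = 0
      ∧ (α ^ (p - 1) * (α * β) - a / 2) ^ 2 = (α * β) ^ (p + 1) + a ^ 2 / 4 := by
  obtain ⟨q, rfl⟩ : ∃ q, p = q + 1 := ⟨p - 1, by omega⟩
  simp only [Nat.add_sub_cancel] at *
  have h1 : (α * β) ^ (q + 1) - (α ^ q) ^ 2 * (α * β) + a * α ^ q = 0 := by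
    linear_combination α ^ q * h
  have h2 : (2 : k) ≠ 0 := by
    intro h0
    have hd := (CharP.cast_eq_zero_iff k (q + 1) 2).mp h0
    have := Nat.le_of_dvd two_pos hd
    omega
  have h4 : (4 : k) ≠ 0 := by
    have : (4 : k) = 2 * 2 := by norm_num
    rw [this]; exact mul_ne_zero h2 h2
  refine ⟨h1, ?_⟩
  field_simp
  linear_combination (-(16 * (α * β))) * h1
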